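/- Let d > 0, let x₀ ∈ ℝ² with ‖x₀‖ ≤ d, let 0 < R < 2d − ‖x₀‖, and let C₀ ∈ ℝ. If z : B_R(x₀) → ℝ is a measurable function satisfying z(x) ≥ 2 log(1/‖x − x₀‖) − C₀ for almost every x ∈ B_R(x₀), then ∫_{B_R(x₀)} e^{z(x)} / log(2d/‖x‖) dx = +∞. In particular there is no finite constant C with ∫_{B_R(x₀)} e^{z(x)}/log(2d/‖x‖) dx ≤ C. -/

import Mathlib

open MeasureTheory Metric Set Real

noncomputable abbrev E2 : Type := EuclideanSpace ℝ (Fin 2)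

/-!
Near `x₀` one has `‖x - x₀‖ ≤ ‖x‖` (trivially if `x₀ = 0`, and on `ball x₀ (‖x₀‖ / 2)` otherwise),
so with `r = ‖x - x₀‖` the integrand is at least `e^{-C₀} / (r² log (2d / r))`. In polar coordinates
the plane contributes the weight `r dr`, leaving `1 / (r log (2d / r))`, the derivative of
`-log (log (2d / r))`, which tends to `-∞` as `r → 0⁺`.
-/

open Filter Topology

theorem exists_forall_mem_ball_norm_sub_le_norm {E : Type*} [SeminormedAddCommGroup E] (x₀ : E)
    {ε : ℝ} (hε : 0 < ε) : ∃ ρ, 0 < ρ ∧ ρ ≤ ε ∧ ∀ x ∈ ball x₀ ρ, ‖x - x₀‖ ≤ ‖x‖ := by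
  by_cases h : ‖x₀‖ = 0
  · refine ⟨ε, hε, le_rfl, fun x _ => ?_⟩
    have := norm_sub_le x x₀
    linarith
  · refine ⟨min ε (‖x₀‖ / 2), lt_min hε (by positivity), min_le_left _ _, fun x hx => ?_⟩
    have hx' := (mem_ball_iff_norm.1 hx).trans_le (min_le_right _ _)
    have := norm_sub_norm_le x₀ x
    rw [norm_sub_rev] at this
    linarith

theorem exp_neg_div_sq_mul_log_le_exp_div_log {r s a C t : ℝ} (hr : 0 < r) (hrs : r ≤ s)
    (hsa : s < a) (ht : 2 * log (1 / r) - C ≤ t) :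
    exp (-C) / (r ^ 2 * log (a / r)) ≤ exp t / log (a / s) := by
  have hs : 0 < s := hr.trans_le hrs
  have hlog_s : 0 < log (a / s) := log_pos ((one_lt_div hs).2 hsa)
  have hlog_le : log (a / s) ≤ log (a / r) :=
    log_le_log (div_pos (hs.trans hsa) hs) (div_le_div_of_nonneg_left (by linarith) hr hrs)
  have hexp : exp (-C) / r ^ 2 ≤ exp t := by
    calc exp (-C) / r ^ 2 = exp (2 * log (1 / r) - C) := by
          rw [two_mul, exp_sub, exp_add, exp_log (by positivity), exp_neg]
          field_simp
      _ ≤ exp t := exp_le_exp.2 ht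
  calc exp (-C) / (r ^ 2 * log (a / r)) = exp (-C) / r ^ 2 / log (a / r) := by rw [div_div]
    _ ≤ exp t / log (a / s) := by gcongr

theorem not_integrableOn_inv_mul_log_div {a : ℝ} (ha : 0 < a) {s : Set ℝ} (hs : s ∈ 𝓝[>] 0) :
    ¬ IntegrableOn (fun r => (r * log (a / r))⁻¹) s := by
  have hder : ∀ᶠ r in 𝓝[>] (0 : ℝ),
      HasDerivAt (fun r => log (log (a / r))) (-(r * log (a / r))⁻¹) r := by
    filter_upwards [Ioo_mem_nhdsGT ha] with r ⟨hr, hra⟩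
    have hlog : log (a / r) ≠ 0 := (log_pos <| (one_lt_div hr).2 hra).ne'
    have hquot : HasDerivAt (fun r => a / r) (-a / r ^ 2) r := by
      simpa using (hasDerivAt_const r a).fun_div (hasDerivAt_id r) hr.ne'
    convert (hquot.log (by positivity)).log hlog using 1
    field_simp
  have hdiv : Tendsto (fun r => a / r) (𝓝[>] 0) atTop :=
    tendsto_inv_nhdsGT_zero.const_mul_atTop ha
  have hderiv : deriv (fun r => log (log (a / r))) =ᶠ[𝓝[>] 0] fun r => -(r * log (a / r))⁻¹ :=
    hder.mono fun r hr => hr.deriv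
  exact not_integrableOn_of_tendsto_norm_atTop_of_deriv_isBigO_filter _ hs
    (hder.mono fun r hr => hr.differentiableAt)
    (tendsto_norm_atTop_atTop.comp (tendsto_log_atTop.comp (tendsto_log_atTop.comp hdiv)))
    (hderiv.trans_isBigO (Asymptotics.isBigO_refl _ _).neg_left)

section Radial

variable {E F : Type*} [NormedAddCommGroup E] [NormedSpace ℝ E] [Nontrivial E]
  [FiniteDimensional ℝ E] [MeasurableSpace E] [BorelSpace E]
  [NormedAddCommGroup F] [NormedSpace ℝ F] (μ : Measure E) [μ.IsAddHaarMeasure]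

theorem integrableOn_ball_fun_norm_sub_iff (x₀ : E) (f : ℝ → F) (r : ℝ) :
    IntegrableOn (fun x => f ‖x - x₀‖) (ball x₀ r) μ ↔
      IntegrableOn (fun y => y ^ (Module.finrank ℝ E - 1) • f y) (Ioo 0 r) := by
  rw [← integrableOn_fun_norm_addHaar μ,
    ← (measurePreserving_add_right μ x₀).integrableOn_comp_preimage
      (measurableEmbedding_addRight x₀), preimage_add_right_ball, sub_self]
  simp [Function.comp_def]

theorem lintegral_ball_div_sq_mul_log_eq_top (hE : Module.finrank ℝ E = 2) (x₀ : E)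
    {a c ρ : ℝ} (ha : 0 < a) (hc : 0 < c) (hρ : 0 < ρ) (hρa : ρ ≤ a) :
    ∫⁻ x in ball x₀ ρ, ENNReal.ofReal (c / (‖x - x₀‖ ^ 2 * log (a / ‖x - x₀‖))) ∂μ = ⊤ := by
  by_contra hfin
  have hnonneg : ∀ x ∈ ball x₀ ρ, 0 ≤ c / (‖x - x₀‖ ^ 2 * log (a / ‖x - x₀‖)) := by
    intro x hx
    rcases (norm_nonneg (x - x₀)).eq_or_lt with hr | hr
    · simp [← hr]
    · have hra : ‖x - x₀‖ ≤ a := (mem_ball_iff_norm.1 hx).le.trans hρa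
      exact div_nonneg hc.le (mul_nonneg (sq_nonneg _) (log_nonneg ((one_le_div hr).2 hra)))
  have hint : IntegrableOn (fun x => c / (‖x - x₀‖ ^ 2 * log (a / ‖x - x₀‖))) (ball x₀ ρ) μ :=
    (lintegral_ofReal_ne_top_iff_integrable (Measurable.aestronglyMeasurable (by fun_prop))
    ((ae_restrict_iff' measurableSet_ball).2 (ae_of_all _ hnonneg))).1 hfin
  rw [integrableOn_ball_fun_norm_sub_iff μ x₀ (fun r => c / (r ^ 2 * log (a / r))), hE] at hint
  refine not_integrableOn_inv_mul_log_div ha (Ioo_mem_nhdsGT hρ)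
    (IntegrableOn.congr_fun (hint.const_mul c⁻¹) (fun r hr => ?_) measurableSet_Ioo)
  norm_num
  field_simp [hr.1.ne']

end Radial

theorem exp_of_log_singularity_not_integrable_general
    (d : ℝ) (x₀ : E2)
    (R : ℝ) (hR : 0 < R) (hRlt : R < 2 * d - ‖x₀‖) (C₀ : ℝ)
    (z : E2 → ℝ)
    (hlow : ∀ᵐ x ∂(volume.restrict (ball x₀ R)),
      2 * Real.log (1 / ‖x - x₀‖) - C₀ ≤ z x) :
    (∫⁻ x in ball x₀ R,
        ENNReal.ofReal (Real.exp (z x) / Real.log (2 * d / ‖x‖)) = ⊤) ∧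
    ∀ C : ℝ, ¬ ((∫ x in ball x₀ R, Real.exp (z x) / Real.log (2 * d / ‖x‖)) ≤ C ∧
      IntegrableOn (fun x : E2 => Real.exp (z x) / Real.log (2 * d / ‖x‖)) (ball x₀ R)) := by
  have hR2d : R ≤ 2 * d := by linarith [norm_nonneg x₀]
  obtain ⟨ρ, hρ, hρR, hnear⟩ := exists_forall_mem_ball_norm_sub_le_norm x₀ hR
  have hbound : ∀ᵐ x ∂(volume.restrict (ball x₀ ρ)),
      ENNReal.ofReal (exp (-C₀) / (‖x - x₀‖ ^ 2 * log (2 * d / ‖x - x₀‖))) ≤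
        ENNReal.ofReal (exp (z x) / log (2 * d / ‖x‖)) := by
    filter_upwards [ae_restrict_mem measurableSet_ball,
      ae_restrict_of_ae_restrict_of_subset (ball_subset_ball hρR) hlow,
      ae_restrict_of_ae (measure_eq_zero_iff_ae_notMem.1 (measure_singleton x₀))]
      with x hx hzx hxx₀
    have hx_lt : ‖x‖ < 2 * d := by
      linarith [norm_le_insert' x x₀, mem_ball_iff_norm.1 (ball_subset_ball hρR hx)]
    exact ENNReal.ofReal_le_ofReal (exp_neg_div_sq_mul_log_le_exp_div_log
      (norm_pos_iff.2 (sub_ne_zero.2 hxx₀)) (hnear x hx) hx_lt hzx)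
  have htop : ∫⁻ x in ball x₀ R, ENNReal.ofReal (exp (z x) / log (2 * d / ‖x‖)) = ⊤ := by
    refine top_le_iff.1 ?_
    calc ⊤ = ∫⁻ x in ball x₀ ρ,
          ENNReal.ofReal (exp (-C₀) / (‖x - x₀‖ ^ 2 * log (2 * d / ‖x - x₀‖))) :=
          (lintegral_ball_div_sq_mul_log_eq_top volume (finrank_euclideanSpace_fin) x₀
            (by linarith) (exp_pos _) hρ (hρR.trans hR2d)).symm
      _ ≤ ∫⁻ x in ball x₀ ρ, ENNReal.ofReal (exp (z x) / log (2 * d / ‖x‖)) :=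
          lintegral_mono_ae hbound
      _ ≤ _ := lintegral_mono_set (ball_subset_ball hρR)
  exact ⟨htop, fun C ⟨_, hint⟩ => hint.lintegral_lt_top.ne htop⟩

theorem exp_of_log_singularity_not_integrable
    (d : ℝ) (hd : 0 < d) (x₀ : E2) (hx₀d : ‖x₀‖ ≤ d)
    (R : ℝ) (hR : 0 < R) (hRlt : R < 2 * d - ‖x₀‖) (C₀ : ℝ)
    (z : E2 → ℝ) (hz : Measurable z)
    (hlow : ∀ᵐ x ∂(volume.restrict (ball x₀ R)),
      2 * Real.log (1 / ‖x - x₀‖) - C₀ ≤ z x) :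
    (∫⁻ x in ball x₀ R,
        ENNReal.ofReal (Real.exp (z x) / Real.log (2 * d / ‖x‖)) = ⊤) ∧
    ∀ C : ℝ, ¬ ((∫ x in ball x₀ R, Real.exp (z x) / Real.log (2 * d / ‖x‖)) ≤ C ∧
      IntegrableOn (fun x : E2 => Real.exp (z x) / Real.log (2 * d / ‖x‖)) (ball x₀ R)) :=
  exp_of_log_singularity_not_integrable_general d x₀ R hR hRlt C₀ z hlow
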